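/- Corollary of the oracle inequality: under the assumptions of Theorem 7, if additionally μ ≥ (1+θ)d₁²(PE) and r = rank(A), then ‖XÂ − XA‖_F² ≤ 2c(θ)·μ·r with c(θ) = 1 + 2/θ. -/

import Mathlib

open Matrix MeasureTheory

/-- List of singular values of a real matrix, sorted in decreasing order
(square roots of the eigenvalues of `Aᵀ * A`). -/
noncomputable def svList {m n : ℕ} (A : Matrix (Fin m) (Fin n) ℝ) : List ℝ :=
  (((List.ofFn (Matrix.isHermitian_conjTranspose_mul_self A).eigenvalues).map Real.sqrt).mergeSort
    (fun a b => decide (b ≤ a)))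

/-- `sv A k` is the `k`-th largest singular value of `A` (1-indexed); `0` if `k` exceeds
the number of singular values. -/
noncomputable def sv {m n : ℕ} (A : Matrix (Fin m) (Fin n) ℝ) (k : ℕ) : ℝ :=
  (svList A).getD (k - 1) 0

/-- Nuclear norm: sum of the singular values. -/
noncomputable def nuclearNorm {m n : ℕ} (A : Matrix (Fin m) (Fin n) ℝ) : ℝ :=
  (svList A).sum

/-- Squared Frobenius norm. -/
noncomputable def frobSq {m n : ℕ} (A : Matrix (Fin m) (Fin n) ℝ) : ℝ :=
  ∑ i, ∑ j, (A i j) ^ 2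

/-- Frobenius inner product. -/
noncomputable def frobInner {m n : ℕ} (C D : Matrix (Fin m) (Fin n) ℝ) : ℝ :=
  ∑ i, ∑ j, C i j * D i j

/-!
Write Δ = XÂ − XA and E = Y − XA. Comparing the objective at Â with its value at A gives the basic
inequality ‖Δ‖² ≤ 2⟨E, Δ⟩ + μ(r − r̂). As PΔ = Δ, ⟨E, Δ⟩ = ⟨PE, Δ⟩, and projecting PE onto the row
space of Δ, whose dimension is rank Δ ≤ r + r̂, gives ⟨PE, Δ⟩ ≤ d₁(PE) √(r + r̂) ‖Δ‖. AM-GM with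
weight 1 + θ and (1 + θ) d₁²(PE) ≤ μ absorb the cross term: ‖Δ‖² ≤ 2μr + ‖Δ‖²/(1 + θ).
-/

lemma frobInner_eq_trace {m n : ℕ} (C D : Matrix (Fin m) (Fin n) ℝ) :
    frobInner C D = trace (Cᵀ * D) := by
  simp only [frobInner, trace, diag_apply, mul_apply, transpose_apply]
  exact Finset.sum_comm

lemma frobSq_eq_frobInner {m n : ℕ} (C : Matrix (Fin m) (Fin n) ℝ) :
    frobSq C = frobInner C C := by
  simp only [frobSq, frobInner, sq]

lemma frobSq_nonneg {m n : ℕ} (C : Matrix (Fin m) (Fin n) ℝ) : 0 ≤ frobSq C := by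
  unfold frobSq; positivity

lemma frobSq_sub {m n : ℕ} (C D : Matrix (Fin m) (Fin n) ℝ) :
    frobSq (C - D) = frobSq C - 2 * frobInner C D + frobSq D := by
  simp only [frobSq, frobInner, Matrix.sub_apply, sub_sq, Finset.sum_add_distrib,
    Finset.sum_sub_distrib, Finset.mul_sum, mul_assoc]

lemma frobInner_mul_left {k m n : ℕ} (C : Matrix (Fin k) (Fin n) ℝ)
    (P : Matrix (Fin k) (Fin m) ℝ) (D : Matrix (Fin m) (Fin n) ℝ) :
    frobInner C (P * D) = frobInner (Pᵀ * C) D := by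
  rw [frobInner_eq_trace, frobInner_eq_trace, transpose_mul, transpose_transpose, Matrix.mul_assoc]

lemma frobInner_mul_transpose_right {m n k : ℕ} (C : Matrix (Fin m) (Fin k) ℝ)
    (D : Matrix (Fin m) (Fin n) ℝ) (N : Matrix (Fin k) (Fin n) ℝ) :
    frobInner C (D * Nᵀ) = frobInner (C * N) D := by
  rw [frobInner_eq_trace, frobInner_eq_trace, transpose_mul, ← Matrix.mul_assoc, trace_mul_comm,
    Matrix.mul_assoc]

lemma frobInner_le_sqrt_mul_sqrt {m n : ℕ} (C D : Matrix (Fin m) (Fin n) ℝ) :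
    frobInner C D ≤ √(frobSq C) * √(frobSq D) := by
  simpa only [frobInner, frobSq, Fintype.sum_prod_type] using
    Real.sum_mul_le_sqrt_mul_sqrt Finset.univ (fun ij : Fin m × Fin n => C ij.1 ij.2)
      (fun ij => D ij.1 ij.2)

lemma nonneg_of_mem_svList {m n : ℕ} (M : Matrix (Fin m) (Fin n) ℝ) {x : ℝ}
    (hx : x ∈ svList M) : 0 ≤ x := by
  rw [svList, (List.mergeSort_perm _ _).mem_iff] at hx
  obtain ⟨y, -, rfl⟩ := List.mem_map.1 hx
  exact Real.sqrt_nonneg y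

lemma sv_one_nonneg {m n : ℕ} (M : Matrix (Fin m) (Fin n) ℝ) : 0 ≤ sv M 1 := by
  rcases h : svList M with _ | ⟨a, t⟩
  · simp [sv, h]
  · simpa [sv, h] using nonneg_of_mem_svList M (h ▸ List.mem_cons_self)

lemma le_sv_one_of_mem_svList {m n : ℕ} (M : Matrix (Fin m) (Fin n) ℝ) {x : ℝ}
    (hx : x ∈ svList M) : x ≤ sv M 1 := by
  have hsorted : (svList M).Pairwise (fun a b => b ≤ a) := by
    unfold svList
    simpa using List.pairwise_mergeSort (le := fun a b : ℝ => decide (b ≤ a))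
      (fun a b c hab hbc => by simp only [decide_eq_true_eq] at *; linarith)
      (fun a b => by simpa using le_total b a) _
  rcases h : svList M with _ | ⟨a, t⟩
  · simp [h] at hx
  · rw [h] at hx hsorted
    rcases List.mem_cons.1 hx with rfl | hxt
    · simp [sv, h]
    · simpa [sv, h] using List.rel_of_pairwise_cons hsorted hxt

lemma eigenvalues_le_sv_one_sq {m n : ℕ} (M : Matrix (Fin m) (Fin n) ℝ) (i : Fin n) :
    (isHermitian_conjTranspose_mul_self M).eigenvalues i ≤ sv M 1 ^ 2 := by
  have hmem : √((isHermitian_conjTranspose_mul_self M).eigenvalues i) ∈ svList M := by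
    rw [svList, (List.mergeSort_perm _ _).mem_iff]
    exact List.mem_map_of_mem (List.mem_ofFn.2 ⟨i, rfl⟩)
  calc _ = √((isHermitian_conjTranspose_mul_self M).eigenvalues i) ^ 2 :=
        (Real.sq_sqrt (eigenvalues_conjTranspose_mul_self_nonneg M i)).symm
    _ ≤ sv M 1 ^ 2 := by gcongr; exact le_sv_one_of_mem_svList M hmem

open scoped MatrixOrder in
lemma Matrix.IsHermitian.dotProduct_mulVec_le {n : Type*} [Fintype n] [DecidableEq n]
    {A : Matrix n n ℝ} (hA : A.IsHermitian) {c : ℝ} (hc : ∀ i, hA.eigenvalues i ≤ c)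
    (x : n → ℝ) : x ⬝ᵥ (A *ᵥ x) ≤ c * (x ⬝ᵥ x) := by
  have hle : A ≤ algebraMap ℝ (Matrix n n ℝ) c := by
    refine le_algebraMap_of_spectrum_le (fun r hr => ?_) hA.isSelfAdjoint
    rw [hA.spectrum_real_eq_range_eigenvalues] at hr
    obtain ⟨i, rfl⟩ := hr
    exact hc i
  simpa [sub_mulVec, dotProduct_sub, Algebra.algebraMap_eq_smul_one, smul_mulVec,
    dotProduct_smul] using (Matrix.le_iff.mp hle).dotProduct_mulVec_nonneg x

lemma mulVec_dotProduct_mulVec_le_sv_one_sq {m n : ℕ} (M : Matrix (Fin m) (Fin n) ℝ)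
    (w : Fin n → ℝ) :
    (M *ᵥ w) ⬝ᵥ (M *ᵥ w) ≤ sv M 1 ^ 2 * (w ⬝ᵥ w) := by
  have h := (isHermitian_conjTranspose_mul_self M).dotProduct_mulVec_le
    (eigenvalues_le_sv_one_sq M) w
  rwa [conjTranspose_eq_transpose_of_trivial, ← mulVec_mulVec, dotProduct_mulVec,
    vecMul_transpose, dotProduct_comm] at h

lemma frobSq_mul_le {m n q : ℕ} (M : Matrix (Fin m) (Fin n) ℝ) (W : Matrix (Fin n) (Fin q) ℝ)
    (hW : Wᵀ * W = 1) : frobSq (M * W) ≤ q * sv M 1 ^ 2 := by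
  have hcol : ∀ k, (M * W)ᵀ k ⬝ᵥ (M * W)ᵀ k ≤ sv M 1 ^ 2 := fun k => by
    have hunit : Wᵀ k ⬝ᵥ Wᵀ k = 1 := by simpa [mul_apply, dotProduct] using congrFun₂ hW k k
    have hMW : (M * W)ᵀ k = M *ᵥ Wᵀ k := by ext i; simp [mul_apply, mulVec, dotProduct]
    simpa [hMW, hunit] using mulVec_dotProduct_mulVec_le_sv_one_sq M (Wᵀ k)
  calc frobSq (M * W) = ∑ k, (M * W)ᵀ k ⬝ᵥ (M * W)ᵀ k := by
        simp only [frobSq, dotProduct, transpose_apply, sq]; exact Finset.sum_comm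
    _ ≤ ∑ _k : Fin q, sv M 1 ^ 2 := Finset.sum_le_sum fun k _ => hcol k
    _ = q * sv M 1 ^ 2 := by simp

lemma Matrix.rank_sub_le {K m n : Type*} [Field K] [Fintype m] [Fintype n]
    (A B : Matrix m n K) : (A - B).rank ≤ A.rank + B.rank := by
  have hrange : LinearMap.range (A - B).mulVecLin ≤
      LinearMap.range A.mulVecLin ⊔ LinearMap.range B.mulVecLin := by
    rintro _ ⟨x, rfl⟩
    rw [mulVecLin_apply, sub_mulVec]
    exact sub_mem (Submodule.mem_sup_left ⟨x, rfl⟩) (Submodule.mem_sup_right ⟨x, rfl⟩)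
  exact (Submodule.finrank_mono hrange).trans (Submodule.finrank_add_le_finrank_add_finrank _ _)

lemma exists_orthonormal_mul_transpose_eq {m n : ℕ} (D : Matrix (Fin m) (Fin n) ℝ) :
    ∃ W : Matrix (Fin n) (Fin D.rank) ℝ, Wᵀ * W = 1 ∧ D * W * Wᵀ = D := by
  let e := (WithLp.linearEquiv 2 ℝ (Fin n → ℝ)).symm
  let S : Submodule ℝ (EuclideanSpace ℝ (Fin n)) :=
    (Submodule.span ℝ (Set.range D.row)).map e.toLinearMap
  have hS : Module.finrank ℝ S = D.rank := by
    rw [LinearEquiv.finrank_map_eq, ← rank_eq_finrank_span_row]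
  let b := (stdOrthonormalBasis ℝ S).reindex (finCongr hS)
  refine ⟨of fun j k => (b k : EuclideanSpace ℝ (Fin n)) j, ?_, ?_⟩
  · ext k l
    have h := orthonormal_iff_ite.mp b.orthonormal k l
    simp only [Submodule.coe_inner, PiLp.inner_apply, RCLike.inner_apply, conj_trivial] at h
    rw [mul_apply, one_apply, ← h]
    exact Finset.sum_congr rfl fun j _ => mul_comm _ _
  · ext i j
    have hx : e (D i) ∈ S := Submodule.mem_map_of_mem (Submodule.subset_span ⟨i, rfl⟩)
    have h := congrArg (fun x : S => (x : EuclideanSpace ℝ (Fin n)) j) (b.sum_repr' ⟨_, hx⟩)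
    simp only [Submodule.coe_sum, Submodule.coe_smul, Submodule.coe_inner, PiLp.inner_apply,
      RCLike.inner_apply, conj_trivial, WithLp.ofLp_sum, WithLp.ofLp_smul, Finset.sum_apply,
      Pi.smul_apply, smul_eq_mul] at h
    exact (Finset.sum_congr rfl fun k _ => by simp [mul_apply, e]).trans h

lemma frobInner_le_sqrt_rank_mul {m n : ℕ} (M D : Matrix (Fin m) (Fin n) ℝ) :
    frobInner M D ≤ √D.rank * sv M 1 * √(frobSq D) := by
  obtain ⟨W, hWW, hDW⟩ := exists_orthonormal_mul_transpose_eq D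
  have hnorm : frobSq (D * W) = frobSq D := by
    rw [frobSq_eq_frobInner, frobSq_eq_frobInner, ← frobInner_mul_transpose_right, hDW]
  calc frobInner M D = frobInner (M * W) (D * W) := by
        rw [← frobInner_mul_transpose_right, hDW]
    _ ≤ √(frobSq (M * W)) * √(frobSq (D * W)) := frobInner_le_sqrt_mul_sqrt _ _
    _ ≤ √(D.rank * sv M 1 ^ 2) * √(frobSq D) := by
        rw [hnorm]; gcongr; exact frobSq_mul_le M W hWW
    _ = √D.rank * sv M 1 * √(frobSq D) := by
        rw [Real.sqrt_mul (Nat.cast_nonneg _), Real.sqrt_sq (sv_one_nonneg M)]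

lemma two_mul_le_mul_sq_add_sq_div {u v c : ℝ} (hc : 0 < c) :
    2 * (u * v) ≤ c * u ^ 2 + v ^ 2 / c := by
  rw [← sub_nonneg, show c * u ^ 2 + v ^ 2 / c - 2 * (u * v) = (c * u - v) ^ 2 / c by
    field_simp; ring]
  positivity

lemma sq_le_of_basic_inequality {x y μ θ a b : ℝ} (hθ : 0 < θ) (ha : 0 ≤ a) (hab : 0 ≤ a + b)
    (hy : (1 + θ) * y ^ 2 ≤ μ) (h : x ^ 2 ≤ 2 * (√(a + b) * y * x) + μ * a - μ * b) :
    x ^ 2 ≤ 2 * (1 + 2 / θ) * μ * a := by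
  have hθ' : 0 < 1 + θ := by linarith
  have hμa : 0 ≤ μ * a := mul_nonneg ((by positivity : 0 ≤ (1 + θ) * y ^ 2).trans hy) ha
  have hamgm := two_mul_le_mul_sq_add_sq_div (u := √(a + b) * y) (v := x) hθ'
  have hbias : (1 + θ) * (√(a + b) * y) ^ 2 ≤ μ * (a + b) := by
    rw [mul_pow, Real.sq_sqrt hab]
    nlinarith
  have hx : x ^ 2 ≤ 2 * μ * a + x ^ 2 / (1 + θ) := by linarith
  have hx' := mul_le_mul_of_nonneg_right hx hθ'.le
  rw [add_mul, div_mul_cancel₀ _ hθ'.ne'] at hx'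
  rw [show 2 * (1 + 2 / θ) * μ * a = (2 * μ * a * (1 + θ) + 2 * μ * a) / θ by field_simp; ring,
    le_div_iff₀ hθ]
  linarith

theorem rsc_oracle_rank_bound_general {m n p : ℕ}
    (Y : Matrix (Fin m) (Fin n) ℝ) (X : Matrix (Fin m) (Fin p) ℝ)
    (A : Matrix (Fin p) (Fin n) ℝ)
    (P : Matrix (Fin m) (Fin m) ℝ)
    (hPsymm : Pᵀ = P) (hPX : P * X = X)
    (μ : ℝ)
    (Ahat : Matrix (Fin p) (Fin n) ℝ)
    (hmin : ∀ B : Matrix (Fin p) (Fin n) ℝ,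
      frobSq (Y - X * Ahat) + μ * Ahat.rank ≤ frobSq (Y - X * B) + μ * B.rank)
    (θ : ℝ) (hθ : 0 < θ)
    (hevent : (1 + θ) * (sv (P * (Y - X * A)) 1) ^ 2 ≤ μ) :
    frobSq (X * Ahat - X * A) ≤ 2 * (1 + 2 / θ) * μ * A.rank := by
  set E := Y - X * A
  set Δ := X * Ahat - X * A
  have hbasic : frobSq Δ ≤ 2 * frobInner E Δ + μ * A.rank - μ * Ahat.rank := by
    have h := hmin A
    rw [← sub_sub_sub_cancel_right Y (X * Ahat) (X * A), frobSq_sub] at h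
    linarith
  have hPΔ : P * Δ = Δ := by rw [Matrix.mul_sub, ← Matrix.mul_assoc, ← Matrix.mul_assoc, hPX]
  have hproj : frobInner E Δ = frobInner (P * E) Δ :=
    calc frobInner E Δ = frobInner E (P * Δ) := by rw [hPΔ]
      _ = frobInner (P * E) Δ := by rw [frobInner_mul_left, hPsymm]
  have hrank : (Δ.rank : ℝ) ≤ A.rank + Ahat.rank := by
    have h : Δ.rank ≤ Ahat.rank + A.rank :=
      (Matrix.rank_sub_le _ _).trans (add_le_add (rank_mul_le_right _ _) (rank_mul_le_right _ _))
    rw [add_comm]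
    exact_mod_cast h
  have hdual : frobInner (P * E) Δ ≤ √(A.rank + Ahat.rank) * sv (P * E) 1 * √(frobSq Δ) :=
    (frobInner_le_sqrt_rank_mul _ _).trans <| mul_le_mul_of_nonneg_right
      (mul_le_mul_of_nonneg_right (Real.sqrt_le_sqrt hrank) (sv_one_nonneg _)) (Real.sqrt_nonneg _)
  rw [← Real.sq_sqrt (frobSq_nonneg Δ)] at hbasic ⊢
  exact sq_le_of_basic_inequality (b := Ahat.rank) hθ (Nat.cast_nonneg _) (by positivity) hevent
    (by linarith)

/-- Corollary of Theorem 7: with μ ≥ (1+θ)d₁²(PE) and r = rank(A),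
‖XÂ − XA‖_F² ≤ 2c(θ)μr. -/
theorem rsc_oracle_rank_bound {m n p : ℕ}
    (Y : Matrix (Fin m) (Fin n) ℝ) (X : Matrix (Fin m) (Fin p) ℝ)
    (A : Matrix (Fin p) (Fin n) ℝ)
    (P : Matrix (Fin m) (Fin m) ℝ)
    (hPsymm : Pᵀ = P) (hPidem : P * P = P) (hPX : P * X = X)
    (hPrange : ∀ u : Fin m → ℝ, ∃ w : Fin p → ℝ, P *ᵥ u = X *ᵥ w)
    (μ : ℝ) (hμ : 0 < μ)
    (Ahat : Matrix (Fin p) (Fin n) ℝ)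
    (hmin : ∀ B : Matrix (Fin p) (Fin n) ℝ,
      frobSq (Y - X * Ahat) + μ * Ahat.rank ≤ frobSq (Y - X * B) + μ * B.rank)
    (θ : ℝ) (hθ : 0 < θ)
    (hevent : (1 + θ) * (sv (P * (Y - X * A)) 1) ^ 2 ≤ μ) :
    frobSq (X * Ahat - X * A) ≤ 2 * (1 + 2 / θ) * μ * A.rank :=
  rsc_oracle_rank_bound_general Y X A P hPsymm hPX μ Ahat hmin θ hθ hevent
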